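/- If {h_k : X → T}_{k∈K} is an ε-almost XOR universal₂ family of hash functions with T = {0,1}^m, then the family g_{(k₁,k₂)}(x) := h_{k₁}(x) XOR k₂, indexed by (k₁,k₂) ∈ K × T, is ε-almost strongly universal₂; that is, for all x₁ ≠ x₂ and all t₁, t₂ ∈ T, Pr[g_{(k₁,k₂)}(x₁) = t₁ and g_{(k₁,k₂)}(x₂) = t₂] ≤ ε/|T| when (k₁,k₂) is chosen uniformly. -/
import Mathlib


open Finset

/-- Probability of `p` when a uniformly random element of `α` is drawn. -/
noncomputable def pr {α : Type*} [Fintype α] (p : α → Prop) : ℝ :=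
  (Nat.card {a : α // p a} : ℝ) / Fintype.card α

/-- Bitwise XOR on bit strings of length `m`. -/
def txor {m : ℕ} (a b : Fin m → Bool) : Fin m → Bool := fun i => Bool.xor (a i) (b i)

/-- if `h` is ε-AXU₂ then `g_{(k₁,k₂)}(x) = h_{k₁}(x) ⊕ k₂` is ε-ASU₂. -/
theorem stmt0 {X K : Type*} [Fintype K] {m : ℕ}
    (h : K → X → (Fin m → Bool)) (ε : ℝ)
    (hAXU : ∀ x₁ x₂ : X, x₁ ≠ x₂ → ∀ t : Fin m → Bool,
      pr (fun k : K => txor (h k x₁) (h k x₂) = t) ≤ ε) :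
    ∀ x₁ x₂ : X, x₁ ≠ x₂ → ∀ t₁ t₂ : Fin m → Bool,
      pr (fun kk : K × (Fin m → Bool) =>
          txor (h kk.1 x₁) kk.2 = t₁ ∧ txor (h kk.1 x₂) kk.2 = t₂)
        ≤ ε / Fintype.card (Fin m → Bool) := by
  intro x₁ x₂ hne t₁ t₂
  have key : ∀ (k : K) (r : Fin m → Bool),
      (txor (h k x₁) r = t₁ ∧ txor (h k x₂) r = t₂) ↔
      (txor (h k x₁) (h k x₂) = txor t₁ t₂ ∧ r = txor (h k x₁) t₁) := by
    intro k r
    constructor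
    · rintro ⟨h1, h2⟩
      have hr : r = txor (h k x₁) t₁ := by
        rw [← h1]; funext i; simp [txor]
      subst hr
      refine ⟨?_, rfl⟩
      funext i
      have := congrFun h2 i
      simp [txor] at this ⊢
      cases hx1 : h k x₁ i <;> cases hx2 : h k x₂ i <;> cases ht1 : t₁ i <;>
        simp_all
    · rintro ⟨hq, rfl⟩
      constructor
      · funext i; simp [txor]
      · funext i
        have := congrFun hq i
        simp [txor] at this ⊢
        cases hx1 : h k x₁ i <;> cases hx2 : h k x₂ i <;> cases ht1 : t₁ i <;>
          simp_all
  have e : {kk : K × (Fin m → Bool) //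
        txor (h kk.1 x₁) kk.2 = t₁ ∧ txor (h kk.1 x₂) kk.2 = t₂} ≃
      {k : K // txor (h k x₁) (h k x₂) = txor t₁ t₂} :=
    { toFun := fun s => ⟨s.1.1, (((key s.1.1 s.1.2).1 s.2).1)⟩
      invFun := fun s => ⟨(s.1, txor (h s.1 x₁) t₁), (key s.1 _).2 ⟨s.2, rfl⟩⟩
      left_inv := fun s => Subtype.ext (Prod.ext rfl (((key s.1.1 s.1.2).1 s.2).2).symm)
      right_inv := fun s => rfl }
  have hcard := Nat.card_congr e
  have hQle : pr (fun k : K => txor (h k x₁) (h k x₂) = txor t₁ t₂) ≤ ε :=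
    hAXU x₁ x₂ hne (txor t₁ t₂)
  have hTpos : (0 : ℝ) < Fintype.card (Fin m → Bool) := by
    exact_mod_cast (Fintype.card_pos : 0 < Fintype.card (Fin m → Bool))
  have heq : pr (fun kk : K × (Fin m → Bool) =>
        txor (h kk.1 x₁) kk.2 = t₁ ∧ txor (h kk.1 x₂) kk.2 = t₂)
      = pr (fun k : K => txor (h k x₁) (h k x₂) = txor t₁ t₂)
        / Fintype.card (Fin m → Bool) := by
    unfold pr
    rw [hcard, Fintype.card_prod]
    push_cast
    rw [div_div]
  rw [heq]
  exact div_le_div_of_nonneg_right hQle hTpos.le
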